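/- For $\epsilon = 1$, the matrix $Q_1$ with entries $(Q_1)_{11} = -2ag\Delta + 2a^\dagger g\Delta + 4g^2\Delta + \Delta$, $(Q_1)_{12} = 4a^2g^2 - 8ag^3 + 4g^4 + \Delta^2$, $(Q_1)_{21} = 4(a^\dagger)^2g^2 + 8a^\dagger g^3 + 4g^4 + \Delta^2$, $(Q_1)_{22} = -2ag\Delta + 2a^\dagger g\Delta + 4g^2\Delta - \Delta$, satisfies $\tilde{H}^1 Q_1 = Q_1 H^1$, so $J_1 = (\mathcal{P}\otimes I)Q_1$ commutes with the Hamiltonian $H^1 = a^\dagger a + \Delta\sigma_x + g(a+a^\dagger)\sigma_z + \sigma_z$. -/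

import Mathlib

/-! Normal-ordering every product with the canonical commutation relation `a a† = a† a + 1`
turns each entry of `H̃¹ Q₁ - Q₁ H¹` into a combination of the monomials `(a†)ⁱ aʲ` whose
coefficients cancel. The parity `𝒫` commutes with the number operator `a† a` and anticommutes
with `a + a†`, so `H^ε (𝒫 ⊗ I) = (𝒫 ⊗ I) H̃^ε`; together with `H̃¹ Q₁ = Q₁ H¹` this makes
`(𝒫 ⊗ I) Q₁` commute with `H¹`. -/

open Polynomial

noncomputable section

/-- The space of operators on `ℂ[x]`. -/
abbrev E := Module.End ℂ (Polynomial ℂ)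

/-- Annihilation operator `a = d/dx`. -/
def opA : E := Polynomial.derivative

/-- Creation operator `a† = ` multiplication by `x`. -/
def opC : E := LinearMap.mulLeft ℂ (X : Polynomial ℂ)

/-- Parity operator `(𝒫 f)(x) = f(-x)`. -/
def opP : E := (aeval (-X : Polynomial ℂ)).toLinearMap

/-- `2×2` matrices of operators, i.e. operators on `ℂ[x] ⊗ ℂ²`. -/
abbrev M2 := Matrix (Fin 2) (Fin 2) E

/-- The asymmetric quantum Rabi Hamiltonian
`H^ε = a†a + Δ σx + g (a+a†) σz + ε σz`. -/
def Hop (g Δ ε : ℝ) : M2 :=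
  !![opC * opA + (g : ℂ) • (opA + opC) + (ε : ℂ) • 1, (Δ : ℂ) • 1;
     (Δ : ℂ) • 1, opC * opA - (g : ℂ) • (opA + opC) - (ε : ℂ) • 1]

/-- The parity operator `𝒫 ⊗ I` on `ℂ[x] ⊗ ℂ²`. -/
def Pm : M2 := !![opP, 0; 0, opP]

end

/-- The matrix `Q₁` for `ε = 1`. -/
noncomputable def Q1 (g Δ : ℝ) : M2 :=
  !![-(2 * g * Δ : ℂ) • opA + (2 * g * Δ : ℂ) • opC + (4 * g^2 * Δ + Δ : ℂ) • 1,
       (4 * g^2 : ℂ) • (opA * opA) - (8 * g^3 : ℂ) • opA + (4 * g^4 + Δ^2 : ℂ) • 1;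
     (4 * g^2 : ℂ) • (opC * opC) + (8 * g^3 : ℂ) • opC + (4 * g^4 + Δ^2 : ℂ) • 1,
       -(2 * g * Δ : ℂ) • opA + (2 * g * Δ : ℂ) • opC + (4 * g^2 * Δ - Δ : ℂ) • 1]

lemma opA_apply (p : ℂ[X]) : opA p = derivative p := rfl

lemma opC_apply (p : ℂ[X]) : opC p = X * p := rfl

lemma opP_apply (p : ℂ[X]) : opP p = p.comp (-X) := by
  simp [opP, comp_eq_aeval]

lemma opA_mul_opC : opA * opC = opC * opA + 1 := by
  refine LinearMap.ext fun p => ?_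
  simp [opA_apply, opC_apply, derivative_mul, add_comm]

lemma opA_mul_opC_mul (T : E) : opA * (opC * T) = opC * (opA * T) + T := by
  rw [← mul_assoc, opA_mul_opC, add_mul, one_mul, mul_assoc]

lemma opP_commute_opC_mul_opA : Commute opP (opC * opA) := by
  refine LinearMap.ext fun p => ?_
  simp [opA_apply, opC_apply, opP_apply, derivative_comp]

lemma opA_add_opC_mul_opP : (opA + opC) * opP = -(opP * (opA + opC)) := by
  refine LinearMap.ext fun p => ?_
  simp [opA_apply, opC_apply, opP_apply, derivative_comp]
  ring

lemma Hop_mul_Pm (g Δ ε : ℝ) : Hop g Δ ε * Pm = Pm * Hop (-g) Δ ε := by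
  have hN := opP_commute_opC_mul_opA.eq.symm
  have hx := opA_add_opC_mul_opP
  simp only [Pm, Hop, Matrix.mul_fin_two]
  -- hide `a† a` and `a + a†` so that distributing the products does not split them
  generalize opC * opA = N at *
  generalize opA + opC = x at *
  simp [mul_add, mul_sub, add_mul, sub_mul, hN, hx]

lemma Hop_neg_mul_Q1 (g Δ : ℝ) : Hop (-g) Δ 1 * Q1 g Δ = Q1 g Δ * Hop g Δ 1 := by
  simp only [Hop, Q1, Matrix.mul_fin_two, EmbeddingLike.apply_eq_iff_eq, Matrix.vecCons_inj,
    and_true, Complex.ofReal_neg, Complex.ofReal_one, mul_add, add_mul, mul_sub, sub_mul,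
    smul_mul_assoc, mul_smul_comm, mul_assoc, mul_one, one_mul, opA_mul_opC_mul, opA_mul_opC]
  refine ⟨⟨?_, ?_⟩, ?_, ?_⟩ <;> module

/-- `Q₁` intertwines `H̃¹` and `H¹`, so `J₁ = (𝒫 ⊗ I) Q₁`
commutes with `H¹`. -/
theorem Q1_intertwines (g Δ : ℝ) :
    Hop (-g) Δ 1 * Q1 g Δ = Q1 g Δ * Hop g Δ 1 ∧
      Hop g Δ 1 * (Pm * Q1 g Δ) = (Pm * Q1 g Δ) * Hop g Δ 1 := by
  refine ⟨Hop_neg_mul_Q1 g Δ, ?_⟩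
  calc Hop g Δ 1 * (Pm * Q1 g Δ) = Pm * (Hop (-g) Δ 1 * Q1 g Δ) := by
        rw [← mul_assoc, Hop_mul_Pm, mul_assoc]
    _ = Pm * Q1 g Δ * Hop g Δ 1 := by rw [Hop_neg_mul_Q1, mul_assoc]
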